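/- For r ∈ ℂ, the shadow operator ξ_r satisfies the equivariance ξ_r(F|_r g) = (ξ_r F)|_{2-r̄} g for every g ∈ SL₂(ℝ) and every F ∈ C²(ℍ). Consequently ξ_r maps r-harmonic (Γ,v)-automorphic forms of weight r to holomorphic (Γ, v̄)-automorphic forms of weight 2 - r̄. -/

import Mathlib

open Complex

noncomputable def mdenom (g : Matrix.SpecialLinearGroup (Fin 2) ℝ) (z : ℂ) : ℂ :=
  (g.1 1 0 : ℂ) * z + (g.1 1 1 : ℂ)

noncomputable def mact (g : Matrix.SpecialLinearGroup (Fin 2) ℝ) (z : ℂ) : ℂ :=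
  ((g.1 0 0 : ℂ) * z + (g.1 0 1 : ℂ)) / mdenom g z

noncomputable def wderivBar (F : ℂ → ℂ) (z : ℂ) : ℂ :=
  (fderiv ℝ F z 1 + Complex.I * fderiv ℝ F z Complex.I) / 2

noncomputable def wderiv (F : ℂ → ℂ) (z : ℂ) : ℂ :=
  (fderiv ℝ F z 1 - Complex.I * fderiv ℝ F z Complex.I) / 2

noncomputable def hlaplacian (r : ℂ) (F : ℂ → ℂ) (z : ℂ) : ℂ :=
  -4 * (z.im : ℂ) ^ 2 * wderiv (fun w => wderivBar F w) z +
    2 * Complex.I * r * (z.im : ℂ) * wderivBar F z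

noncomputable def shadowOp (r : ℂ) (F : ℂ → ℂ) (z : ℂ) : ℂ :=
  2 * Complex.I * ((z.im : ℂ) ^ (starRingEnd ℂ r)) * (starRingEnd ℂ) (wderivBar F z)

/-!
The antiholomorphic derivative `∂̄` kills the holomorphic factor `(cz+d)^{-r}` and, by the chain
rule, pulls back along `z ↦ gz` with the factor `conj((cz+d)^{-2})`. After conjugation the weight
`2 - r̄` comes from `Im(gz) = Im z / |cz+d|²` together with
`conj((cz+d)^{-r}) = (cz+d)^{r̄} / |cz+d|^{2r̄}`.
Holomorphy of `ξ_r F` follows since `∂̄(ξ_r F) = -(i/2) y^{r̄-2} conj(Δ_r F)`, and automorphy is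
equivariance applied to `F = v(γ)⁻¹ F|_r γ`.
-/

open Filter Topology
open scoped ComplexConjugate

lemma ContinuousLinearMap.apply_eq_re_mul_add_im_mul (L : ℂ →L[ℝ] ℂ) (v : ℂ) :
    L v = v.re * L 1 + v.im * L I := by
  conv_lhs => rw [← re_add_im v, ← mul_one (v.re : ℂ), ← real_smul, ← real_smul]
  rw [map_add, map_smul, map_smul, real_smul, real_smul]

section Wirtinger

variable {F G : ℂ → ℂ} {z : ℂ}

lemma wderivBar_congr (h : F =ᶠ[𝓝 z] G) : wderivBar F z = wderivBar G z := by
  rw [wderivBar, wderivBar, h.fderiv_eq]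

lemma wderivBar_mul (hF : DifferentiableAt ℝ F z) (hG : DifferentiableAt ℝ G z) :
    wderivBar (fun w => F w * G w) z = wderivBar F z * G z + F z * wderivBar G z := by
  simp only [wderivBar, fderiv_fun_mul hF hG, add_apply, smul_apply, smul_eq_mul]
  ring

lemma wderivBar_const_mul (hF : DifferentiableAt ℝ F z) (c : ℂ) :
    wderivBar (fun w => c * F w) z = c * wderivBar F z := by
  simp only [wderivBar, fderiv_const_mul hF, smul_apply, smul_eq_mul]
  ring

lemma wderivBar_eq_zero_iff (hF : DifferentiableAt ℝ F z) :
    wderivBar F z = 0 ↔ DifferentiableAt ℂ F z := by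
  rw [differentiableAt_complex_iff_differentiableAt_real, wderivBar, smul_eq_mul]
  constructor
  · intro h
    exact ⟨hF, by linear_combination (-2 * I) * h + fderiv ℝ F z I * I_sq⟩
  · rintro ⟨-, h⟩
    linear_combination (I / 2) * h + fderiv ℝ F z 1 / 2 * I_sq

lemma DifferentiableAt.wderivBar_eq_zero (hF : DifferentiableAt ℂ F z) : wderivBar F z = 0 :=
  (wderivBar_eq_zero_iff (hF.restrictScalars ℝ)).2 hF

lemma wderivBar_comp {φ : ℂ → ℂ} (hφ : DifferentiableAt ℂ φ z)
    (hF : DifferentiableAt ℝ F (φ z)) :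
    wderivBar (fun w => F (φ w)) z = conj (deriv φ z) * wderivBar F (φ z) := by
  have hφ' : ∀ v, fderiv ℝ φ z v = deriv φ z * v := fun v => by
    rw [hφ.fderiv_restrictScalars ℝ, ContinuousLinearMap.coe_restrictScalars',
      hφ.hasDerivAt.hasFDerivAt.fderiv]
    simp [mul_comm]
  have hconj : conj (deriv φ z) = (deriv φ z).re - (deriv φ z).im * I := by
    apply Complex.ext <;> simp
  rw [wderivBar, wderivBar, fderiv_fun_comp z hF (hφ.restrictScalars ℝ)]
  simp only [ContinuousLinearMap.comp_apply, hφ']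
  set L := fderiv ℝ F (φ z)
  rw [L.apply_eq_re_mul_add_im_mul, L.apply_eq_re_mul_add_im_mul (deriv φ z * I), hconj]
  simp only [mul_one, mul_re, mul_im, I_re, I_im]
  push_cast
  linear_combination ((deriv φ z).im * L I / 2) * I_sq

lemma wderivBar_conj : wderivBar (fun w => conj (F w)) z = conj (wderiv F z) := by
  have h := fderiv_star (𝕜 := ℝ) (f := F) (x := z)
  simp only [star_def] at h
  simp [wderivBar, wderiv, h, map_ofNat]

lemma hasFDerivAt_ofReal_im_cpow (s : ℂ) (hz : 0 < z.im) :
    HasFDerivAt (fun w : ℂ => (w.im : ℂ) ^ s)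
      ((s * (z.im : ℂ) ^ (s - 1)) • (ofRealCLM.comp imCLM)) z :=
  (hasStrictDerivAt_cpow_const (c := s) (ofReal_mem_slitPlane.2 hz)).hasDerivAt.comp_hasFDerivAt
    (f := ofRealCLM.comp imCLM) z (ofRealCLM.comp imCLM).hasFDerivAt

lemma wderivBar_ofReal_im_cpow (s : ℂ) (hz : 0 < z.im) :
    wderivBar (fun w => (w.im : ℂ) ^ s) z = s * (z.im : ℂ) ^ (s - 1) * (I / 2) := by
  simp only [wderivBar, (hasFDerivAt_ofReal_im_cpow s hz).fderiv, smul_apply,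
    ContinuousLinearMap.comp_apply, imCLM_apply, ofRealCLM_apply, one_im, I_im, smul_eq_mul]
  push_cast
  ring

lemma ContDiffAt.differentiableAt_wderivBar (hF : ContDiffAt ℝ 2 F z) :
    DifferentiableAt ℝ (wderivBar F) z := by
  have h : DifferentiableAt ℝ (fderiv ℝ F) z :=
    (hF.fderiv_right (m := 1) (by norm_num)).differentiableAt one_ne_zero
  unfold wderivBar
  fun_prop

end Wirtinger

section Moebius

variable (g : Matrix.SpecialLinearGroup (Fin 2) ℝ) {z : ℂ}

lemma det_fin_two_eq_one : g.1 0 0 * g.1 1 1 - g.1 0 1 * g.1 1 0 = 1 := by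
  rw [← Matrix.det_fin_two]
  exact g.2

lemma mdenom_im : (mdenom g z).im = g.1 1 0 * z.im := by
  simp [mdenom]

lemma mdenom_ne_zero (hz : 0 < z.im) : mdenom g z ≠ 0 := by
  intro h
  have hc : g.1 1 0 = 0 := by
    have := congrArg im h
    rw [mdenom_im] at this
    simpa [hz.ne'] using this
  have hd : g.1 1 1 = 0 := by
    simpa [mdenom, hc] using congrArg re h
  simpa [hc, hd] using det_fin_two_eq_one g

lemma im_mact : (mact g z).im = z.im / normSq (mdenom g z) := by
  rw [mact, div_im, div_sub_div_same]
  congr 1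
  simp only [mdenom, add_im, add_re, mul_im, mul_re, ofReal_re, ofReal_im]
  linear_combination z.im * det_fin_two_eq_one g

lemma im_mact_pos (hz : 0 < z.im) : 0 < (mact g z).im := by
  rw [im_mact]
  exact div_pos hz (normSq_pos.2 (mdenom_ne_zero g hz))

lemma hasDerivAt_mact (hz : 0 < z.im) : HasDerivAt (mact g) ((mdenom g z ^ 2)⁻¹) z := by
  have hnum : HasDerivAt (fun w : ℂ => (g.1 0 0 : ℂ) * w + g.1 0 1) (g.1 0 0) z := by
    simpa using ((hasDerivAt_id z).const_mul (g.1 0 0 : ℂ)).add_const (g.1 0 1 : ℂ)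
  have hden : HasDerivAt (fun w : ℂ => (g.1 1 0 : ℂ) * w + g.1 1 1) (g.1 1 0) z := by
    simpa using ((hasDerivAt_id z).const_mul (g.1 1 0 : ℂ)).add_const (g.1 1 1 : ℂ)
  have hdet : (g.1 0 0 : ℂ) * (g.1 1 0 * z + g.1 1 1) - (g.1 0 0 * z + g.1 0 1) * g.1 1 0 = 1 := by
    have : (g.1 0 0 : ℂ) * g.1 1 1 - g.1 0 1 * g.1 1 0 = 1 := by exact_mod_cast det_fin_two_eq_one g
    linear_combination this
  have hquot := hnum.div hden (mdenom_ne_zero g hz)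
  rwa [hdet, one_div] at hquot

lemma differentiableAt_mdenom_cpow (r : ℂ) (hz : 0 < z.im) :
    DifferentiableAt ℂ (fun w => mdenom g w ^ (-r)) z := by
  by_cases hc : g.1 1 0 = 0
  · simp only [mdenom, hc, ofReal_zero, zero_mul, zero_add]
    exact differentiableAt_const _
  · have hmem : mdenom g z ∈ slitPlane :=
      mem_slitPlane_iff.2 (Or.inr (by rw [mdenom_im]; exact mul_ne_zero hc hz.ne'))
    exact (by unfold mdenom; fun_prop : DifferentiableAt ℂ (mdenom g) z).cpow_const hmem

lemma ofReal_im_mact_cpow (s : ℂ) (hz : 0 < z.im) :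
    ((mact g z).im : ℂ) ^ s = (z.im : ℂ) ^ s / (normSq (mdenom g z) : ℂ) ^ s := by
  rw [im_mact, ofReal_div, div_cpow_ofReal_nonneg hz.le (normSq_nonneg _)]

end Moebius

lemma conj_log_eq (j : ℂ) : conj (log j) = log (normSq j) - log j := by
  rw [← ofReal_log (normSq_nonneg j)]
  apply Complex.ext
  · simp only [conj_re, log_re, sub_re, ofReal_re, normSq_eq_norm_sq, Real.log_pow]
    push_cast
    ring
  · simp [log_im]

/-- Valid on the branch cut as well: `mdenom g z` is a negative real when `g 1 0 = 0 > g 1 1`. -/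
lemma conj_cpow_neg {j : ℂ} (hj : j ≠ 0) (r : ℂ) :
    conj (j ^ (-r)) = j ^ conj r / (normSq j : ℂ) ^ conj r := by
  have hN : (normSq j : ℂ) ≠ 0 := ofReal_ne_zero.2 (normSq_pos.2 hj).ne'
  rw [cpow_def_of_ne_zero hj, cpow_def_of_ne_zero hj, cpow_def_of_ne_zero hN, ← exp_conj,
    ← exp_sub, map_mul, conj_log_eq, map_neg]
  congr 1
  ring

section Shadow

variable {r : ℂ} {F G : ℂ → ℂ} {z : ℂ}

lemma differentiableAt_slash (g : Matrix.SpecialLinearGroup (Fin 2) ℝ) (hz : 0 < z.im)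
    (hF : DifferentiableAt ℝ F (mact g z)) :
    DifferentiableAt ℝ (fun w => mdenom g w ^ (-r) * F (mact g w)) z :=
  ((differentiableAt_mdenom_cpow g r hz).restrictScalars ℝ).mul
    (hF.comp z ((hasDerivAt_mact g hz).differentiableAt.restrictScalars ℝ))

lemma wderivBar_slash (g : Matrix.SpecialLinearGroup (Fin 2) ℝ) (hz : 0 < z.im)
    (hF : DifferentiableAt ℝ F (mact g z)) :
    wderivBar (fun w => mdenom g w ^ (-r) * F (mact g w)) z =
      mdenom g z ^ (-r) * conj ((mdenom g z ^ 2)⁻¹) * wderivBar F (mact g z) := by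
  have hj := differentiableAt_mdenom_cpow g r hz
  have hmact := hasDerivAt_mact g hz
  have hFg : DifferentiableAt ℝ (fun w => F (mact g w)) z :=
    hF.comp z (hmact.differentiableAt.restrictScalars ℝ)
  rw [wderivBar_mul (hj.restrictScalars ℝ) hFg,
    hj.wderivBar_eq_zero, wderivBar_comp hmact.differentiableAt hF, hmact.deriv]
  ring

theorem shadowOp_slash (g : Matrix.SpecialLinearGroup (Fin 2) ℝ) (hz : 0 < z.im)
    (hF : DifferentiableAt ℝ F (mact g z)) :
    shadowOp r (fun w => mdenom g w ^ (-r) * F (mact g w)) z =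
      mdenom g z ^ (-((2 : ℂ) - conj r)) * shadowOp r F (mact g z) := by
  have hj := mdenom_ne_zero g hz
  rw [shadowOp, shadowOp, wderivBar_slash g hz hF, ofReal_im_mact_cpow g _ hz, neg_sub,
    cpow_sub _ _ hj, cpow_two, map_mul, map_mul, conj_cpow_neg hj, conj_conj]
  field_simp

lemma shadowOp_congr (h : F =ᶠ[𝓝 z] G) : shadowOp r F z = shadowOp r G z := by
  rw [shadowOp, shadowOp, wderivBar_congr h]

lemma shadowOp_const_mul (hF : DifferentiableAt ℝ F z) (c : ℂ) :
    shadowOp r (fun w => c * F w) z = conj c * shadowOp r F z := by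
  rw [shadowOp, shadowOp, wderivBar_const_mul hF, map_mul]
  ring

lemma differentiableAt_real_shadowOp (hF : ContDiffAt ℝ 2 F z) (hz : 0 < z.im) :
    DifferentiableAt ℝ (shadowOp r F) z :=
  ((hasFDerivAt_ofReal_im_cpow (conj r) hz).differentiableAt.const_mul (2 * I)).mul
    hF.differentiableAt_wderivBar.star

lemma wderivBar_shadowOp (hF : ContDiffAt ℝ 2 F z) (hz : 0 < z.im) :
    wderivBar (shadowOp r F) z =
      -(I / 2) * (z.im : ℂ) ^ (conj r - 2) * conj (hlaplacian r F z) := by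
  have hP := (hasFDerivAt_ofReal_im_cpow (conj r) hz).differentiableAt
  have hB : DifferentiableAt ℝ (fun w => conj (wderivBar F w)) z :=
    hF.differentiableAt_wderivBar.star
  have hy : (z.im : ℂ) ≠ 0 := ofReal_ne_zero.2 hz.ne'
  change wderivBar (fun w => 2 * I * (w.im : ℂ) ^ conj r * conj (wderivBar F w)) z = _
  rw [wderivBar_mul (hP.const_mul _) hB, wderivBar_const_mul hP,
    wderivBar_ofReal_im_cpow _ hz, wderivBar_conj, hlaplacian, cpow_sub _ _ hy,
    cpow_sub _ _ hy, cpow_one, cpow_two]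
  simp only [map_add, map_mul, map_neg, map_pow, map_ofNat, conj_ofReal, conj_I]
  field_simp
  ring

theorem shadowOp_eq_of_slash_eq (g : Matrix.SpecialLinearGroup (Fin 2) ℝ) (c : ℂ)
    (hz : 0 < z.im) (hF : DifferentiableAt ℝ F (mact g z))
    (h : ∀ᶠ w in 𝓝 z, c * (mdenom g w ^ (-r) * F (mact g w)) = F w) :
    conj c * mdenom g z ^ (-((2 : ℂ) - conj r)) * shadowOp r F (mact g z) = shadowOp r F z := by
  rw [← shadowOp_congr h, shadowOp_const_mul (differentiableAt_slash g hz hF),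
    shadowOp_slash g hz hF, mul_assoc]

theorem differentiableAt_shadowOp (hF : ContDiffAt ℝ 2 F z) (hz : 0 < z.im)
    (hΔ : hlaplacian r F z = 0) : DifferentiableAt ℂ (shadowOp r F) z := by
  rw [← wderivBar_eq_zero_iff (differentiableAt_real_shadowOp hF hz), wderivBar_shadowOp hF hz, hΔ,
    map_zero, mul_zero]

end Shadow

/-- the shadow operator satisfies `ξ_r (F|_r g) = (ξ_r F)|_{2-r̄} g` for
every `g ∈ SL₂(ℝ)`; consequently it maps `r`-harmonic `(Γ,v)`-automorphic forms of
weight `r` to holomorphic `(Γ, v̄)`-automorphic forms of weight `2 - r̄`. -/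
theorem shadow_equivariance (r : ℂ) (F : ℂ → ℂ)
    (hF : ContDiffOn ℝ 2 F {z : ℂ | 0 < z.im}) :
    (∀ g : Matrix.SpecialLinearGroup (Fin 2) ℝ, ∀ z : ℂ, 0 < z.im →
        shadowOp r (fun w => mdenom g w ^ (-r) * F (mact g w)) z =
          mdenom g z ^ (-((2 : ℂ) - starRingEnd ℂ r)) * shadowOp r F (mact g z)) ∧
    (∀ (Γ : Subgroup (Matrix.SpecialLinearGroup (Fin 2) ℝ))
        (v : Matrix.SpecialLinearGroup (Fin 2) ℝ → ℂ),
        (∀ z : ℂ, 0 < z.im → hlaplacian r F z = 0) →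
        (∀ γ ∈ Γ, ∀ z : ℂ, 0 < z.im →
            (v γ)⁻¹ * mdenom γ z ^ (-r) * F (mact γ z) = F z) →
        DifferentiableOn ℂ (shadowOp r F) {z : ℂ | 0 < z.im} ∧
          ∀ γ ∈ Γ, ∀ z : ℂ, 0 < z.im →
            (starRingEnd ℂ (v γ))⁻¹ * mdenom γ z ^ (-((2 : ℂ) - starRingEnd ℂ r)) *
                shadowOp r F (mact γ z) = shadowOp r F z) := by
  have hH := UpperHalfPlane.isOpen_upperHalfPlaneSet
  have hFat : ∀ z : ℂ, 0 < z.im → ContDiffAt ℝ 2 F z := fun z hz => hF.contDiffAt (hH.mem_nhds hz)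
  have hFmact : ∀ (g : Matrix.SpecialLinearGroup (Fin 2) ℝ) (z : ℂ), 0 < z.im →
      DifferentiableAt ℝ F (mact g z) := fun g z hz =>
    (hFat _ (im_mact_pos g hz)).differentiableAt two_ne_zero
  refine ⟨fun g z hz => shadowOp_slash g hz (hFmact g z hz), fun Γ v hΔ hv => ⟨?_, ?_⟩⟩
  · exact fun z hz => (differentiableAt_shadowOp (hFat z hz) hz (hΔ z hz)).differentiableWithinAt
  · intro γ hγ z hz
    rw [← map_inv₀]
    refine shadowOp_eq_of_slash_eq γ _ hz (hFmact γ z hz) ?_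
    filter_upwards [hH.mem_nhds hz] with w hw
    rw [← mul_assoc, hv γ hγ w hw]
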